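/- Define T_1(z) = z + Σ_{n≥1} n^n z^{n+1}/(n+1)! and let T^•(z) = Σ_{n≥1} n^{n-1} z^n/n! be the rooted labelled tree generating function. Then T_1'(z)·(1 − T^•(z)) = 1 as formal power series. -/

import Mathlib

open PowerSeries

/-- `T_1(z) = z + Σ_{n≥1} n^n z^{n+1}/(n+1)!`, i.e. coefficient of `z^m` (m ≥ 1)
is `(m-1)^{m-1}/m!` (with `0^0 = 1`). -/
noncomputable def Tone : PowerSeries ℝ :=
  PowerSeries.mk fun n => if n = 0 then 0 else ((n : ℝ) - 1) ^ (n - 1) / (Nat.factorial n)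

/-- The EGF of rooted labelled trees, `T^•(z) = Σ_{n≥1} n^{n-1} z^n/n!`. -/
noncomputable def Tdot : PowerSeries ℝ :=
  PowerSeries.mk fun n => if n = 0 then 0 else (n : ℝ) ^ (n - 1) / (Nat.factorial n)

/-!
Comparing coefficients of `zⁿ/n!`, the claim is the Abel-type identity
`∑_{k<n} C(n,k) k^k (n-k)^(n-k-1) = n^n` for `n ≥ 1`. This is the value at `y = 0` of
`abelSum n y = ∑_{k<n} C(n,k) (n-k)^(n-k-1) (y+k)^k = n (y+n)^(n-1)`, proved by induction on `n`:
both sides have derivative `n · abelSum (n-1) (y+1)`, and they agree at `y = -n`, where the sum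
is, up to sign and its missing `k = n` term, the `n`-th forward difference of `t ↦ t^(n-1)`,
which vanishes.
-/

open Finset Nat

theorem sum_neg_one_pow_mul_choose_mul_add_pow_eq_zero {R : Type*} [CommRing R] {j n : ℕ}
    (h : j < n) (c : R) :
    ∑ k ∈ range (n + 1), (-1) ^ (n - k) * (n.choose k : R) * (c + k) ^ j = 0 := by
  have := fwdDiff_iter_eq_sum_shift (1 : R) (fun r ↦ r ^ j) n c
  rw [fwdDiff_iter_pow_eq_zero_of_lt h] at this
  simpa [zsmul_eq_mul] using this.symm

noncomputable def abelSum (n : ℕ) (y : ℝ) : ℝ :=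
  ∑ k ∈ range n, n.choose k * ((n : ℝ) - k) ^ (n - k - 1) * (y + k) ^ k

theorem hasDerivAt_abelSum_succ (m : ℕ) (y : ℝ) :
    HasDerivAt (abelSum (m + 1)) ((m + 1) * abelSum m (y + 1)) y := by
  have h := HasDerivAt.fun_sum (u := range (m + 1)) (x := y) fun k _ ↦
    (((hasDerivAt_id' y).add_const (k : ℝ)).pow k).const_mul
      (((m + 1).choose k : ℝ) * (((m + 1 : ℕ) : ℝ) - k) ^ (m + 1 - k - 1))
  refine h.congr_deriv ?_
  rw [sum_range_succ', abelSum, mul_sum]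
  simp only [CharP.cast_eq_zero, mul_zero, zero_mul, add_zero]
  refine sum_congr rfl fun i _ ↦ ?_
  have hc : ((m + 1 : ℕ) : ℝ) * m.choose i = (m + 1).choose (i + 1) * (i + 1 : ℕ) := by
    exact_mod_cast Nat.add_one_mul_choose_eq m i
  push_cast at hc ⊢
  linear_combination -(((m : ℝ) - i) ^ (m - i - 1) * (y + 1 + i) ^ i) * hc

theorem abelSum_succ_neg_succ (n : ℕ) : abelSum (n + 1) (-(n + 1)) = 0 ^ n := by
  have h := sum_neg_one_pow_mul_choose_mul_add_pow_eq_zero (Nat.lt_add_one n) (-(n + 1 : ℝ))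
  rw [sum_range_succ] at h
  have hterm : ∀ k ∈ range (n + 1),
      ((n + 1).choose k : ℝ) * (((n + 1 : ℕ) : ℝ) - k) ^ (n + 1 - k - 1) * (-(n + 1) + k) ^ k
        = -((-1) ^ (n + 1 - k) * ((n + 1).choose k : ℝ) * (-(n + 1) + k) ^ n) := by
    intro k hk
    obtain ⟨d, rfl⟩ := Nat.exists_eq_add_of_le (mem_range_succ_iff.mp hk)
    simp only [show k + d + 1 - k = d + 1 by omega, Nat.add_sub_cancel]
    rw [show ((k + d + 1 : ℕ) : ℝ) - k = -(-((k + d : ℕ) + 1) + k) by push_cast; ring, neg_pow]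
    ring
  rw [abelSum, sum_congr rfl hterm, sum_neg_distrib]
  simp only [Nat.sub_self, pow_zero, Nat.choose_self, one_mul, Nat.cast_add_one,
    neg_add_cancel] at h
  linear_combination -h

theorem abelSum_eq (n : ℕ) (y : ℝ) : abelSum n y = n * (y + n) ^ (n - 1) := by
  induction n generalizing y with
  | zero => simp [abelSum]
  | succ m ih =>
    set g : ℝ → ℝ := fun y ↦ abelSum (m + 1) y - (m + 1) * (y + (m + 1)) ^ m
    have hg : ∀ y, HasDerivAt g 0 y := fun y ↦ by
      have h := (hasDerivAt_abelSum_succ m y).sub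
        ((((hasDerivAt_id' y).add_const ((m : ℝ) + 1)).pow m).const_mul ((m : ℝ) + 1))
      refine h.congr_deriv ?_
      rw [ih]
      rcases m with _ | m <;> push_cast <;> ring
    have hconst := is_const_of_deriv_eq_zero (fun y ↦ (hg y).differentiableAt)
      (fun y ↦ (hg y).deriv) y (-(m + 1))
    have hbase : g (-(m + 1)) = 0 := by
      simp only [g, abelSum_succ_neg_succ, neg_add_cancel]
      rcases m with _ | m <;> simp
    push_cast
    linear_combination hconst.trans hbase

theorem coeff_mul_mk_div_factorial {K : Type*} [Field K] [CharZero K] (a b : ℕ → K) (n : ℕ) :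
    coeff n (mk (fun i ↦ a i / i !) * mk (fun i ↦ b i / i !)) =
      (∑ k ∈ range (n + 1), n.choose k * a k * b (n - k)) / n ! := by
  rw [coeff_mul, Nat.sum_antidiagonal_eq_sum_range_succ_mk, sum_div]
  refine sum_congr rfl fun k hk ↦ ?_
  have hfac : (n.choose k : K) * k ! * (n - k)! = n ! := by
    exact_mod_cast Nat.choose_mul_factorial_mul_factorial (mem_range_succ_iff.mp hk)
  simp only [coeff_mk]
  rw [← hfac]
  have : (n.choose k : K) ≠ 0 :=
    Nat.cast_ne_zero.mpr (n.choose_pos (mem_range_succ_iff.mp hk)).ne'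
  field_simp

theorem derivative_Tone : derivative ℝ Tone = mk fun n ↦ (n : ℝ) ^ n / n ! := by
  ext n
  rw [coeff_derivative, Tone, coeff_mk, coeff_mk,
    if_neg n.succ_ne_zero, Nat.factorial_succ]
  push_cast
  field_simp
  ring

theorem one_sub_Tdot :
    1 - Tdot = mk fun n ↦ (if n = 0 then 1 else -(n : ℝ) ^ (n - 1)) / n ! := by
  ext n
  rcases n with _ | n <;> simp [Tdot, coeff_one, neg_div]

/-- `T_1'(z)·(1 − T^•(z)) = 1` as formal power series. -/
theorem stmt_9 : PowerSeries.derivativeFun Tone * (1 - Tdot) = 1 := by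
  ext n
  change coeff n (derivative ℝ Tone * _) = _
  rw [derivative_Tone, one_sub_Tdot, coeff_mul_mk_div_factorial, coeff_one]
  rcases n with _ | n
  · simp
  have hterm : ∀ k ∈ range (n + 1), ((n + 1).choose k : ℝ) * (k : ℝ) ^ k *
      (if n + 1 - k = 0 then 1 else -((n + 1 - k : ℕ) : ℝ) ^ (n + 1 - k - 1)) =
      -((n + 1).choose k * (((n + 1 : ℕ) : ℝ) - k) ^ (n + 1 - k - 1) * (0 + k) ^ k) := by
    intro k hk
    have hk : k < n + 1 := mem_range.mp hk
    rw [if_neg (by omega), Nat.cast_sub hk.le]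
    ring
  rw [sum_range_succ, sum_congr rfl hterm, sum_neg_distrib, ← abelSum, abelSum_eq,
    if_neg n.succ_ne_zero, div_eq_zero_iff]
  left
  rw [Nat.choose_self, Nat.sub_self, if_pos rfl]
  push_cast
  ring
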